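/- arXiv:chao-dyn/9812013 — 2 statements merged into one kernel-verified Lean document; each statement's English description precedes it below -/
import Mathlib

section
/- For B(x) = T_1(x) − T_4(x) and the dynamics X ↦ T_2(X), the expected squared error is σ(N) = 2/N² for N ≥ 2, while for the dynamics X ↦ T_4(X) it is σ(N) = 1/N², where σ(N) = (1/N)(⟨B²⟩−⟨B⟩²) + (2/N²)Σ_{l=1}^{N}(N−l)(⟨B·(B∘T_{q^l})⟩−⟨B⟩²) with q ∈ {2,4}. -/
/-!
Substituting `x = cos θ` turns the Chebyshev weight into `dθ / π` and `T_n` into `cos (n θ)`, so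
`⟨T_m T_n⟩ = δ_{mn} / 2` for `m, n ≥ 1`. Since `T_4 ∘ T_M = T_{4M}`, we get `B ∘ T_M = T_M - T_{4M}`,
hence `⟨B⟩ = 0`, `⟨B²⟩ = 1`, and for `M ≥ 2` the correlation `⟨B · (B ∘ T_M)⟩` is `-1/2` when
`M = 4` and `0` otherwise. In `σ(N)` only the lag `l` with `q ^ l = 4` survives: `l = 2` for
`q = 2` and `l = 1` for `q = 4`.
-/

open Polynomial Polynomial.Chebyshev MeasureTheory Finset Real

namespace Polynomial.Chebyshev

theorem setIntegral_Icc_mul_chebyshevWeight (f : ℝ → ℝ) :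
    ∫ x in Set.Icc (-1 : ℝ) 1, f x * (1 / (π * √(1 - x ^ 2))) = (∫ x, f x ∂measureT) / π := by
  rw [integral_measureT, intervalIntegral.integral_of_le (by norm_num),
    integral_Icc_eq_integral_Ioc, ← integral_div]
  congr 1 with x
  rw [Real.sqrt_inv]
  ring

theorem integral_eval_T_real_mul_eval_T_real_measureT_of_ne_zero {m : ℕ} (hm : m ≠ 0) (n : ℕ) :
    ∫ x, (T ℝ m).eval x * (T ℝ n).eval x ∂measureT = if m = n then π / 2 else 0 := by
  split_ifs with h
  · subst h
    exact integral_T_real_mul_self_measureT_of_ne_zero hm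
  · exact integral_eval_T_real_mul_eval_T_real_measureT_of_ne h

theorem integral_eval_T_real_sub_mul_sub_measureT {a b : ℕ} (ha : a ≠ 0) (hb : b ≠ 0) (c d : ℕ) :
    ∫ x, ((T ℝ a).eval x - (T ℝ b).eval x) * ((T ℝ c).eval x - (T ℝ d).eval x) ∂measureT
      = (if a = c then π / 2 else 0) - (if a = d then π / 2 else 0)
        - (if b = c then π / 2 else 0) + (if b = d then π / 2 else 0) := by
  have hint (m n : ℕ) : Integrable (fun x ↦ (T ℝ m).eval x * (T ℝ n).eval x) measureT :=
    integrable_measureT (by fun_prop)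
  simp_rw [sub_mul, mul_sub]
  rw [integral_sub ((hint a c).sub' (hint a d)) ((hint b c).sub' (hint b d)),
    integral_sub (hint a c) (hint a d), integral_sub (hint b c) (hint b d),
    integral_eval_T_real_mul_eval_T_real_measureT_of_ne_zero ha,
    integral_eval_T_real_mul_eval_T_real_measureT_of_ne_zero ha,
    integral_eval_T_real_mul_eval_T_real_measureT_of_ne_zero hb,
    integral_eval_T_real_mul_eval_T_real_measureT_of_ne_zero hb]
  ring

end Polynomial.Chebyshev

section

variable {B : ℝ → ℝ}

theorem eval_T_one_sub_T_four_comp_T (hB : ∀ x, B x = (T ℝ 1).eval x - (T ℝ 4).eval x)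
    (M : ℕ) (x : ℝ) : B ((T ℝ M).eval x) = (T ℝ M).eval x - (T ℝ (4 * M : ℕ)).eval x := by
  rw [hB, Nat.cast_mul, T_mul, eval_comp, T_one, eval_X]
  rfl

theorem integral_T_one_sub_T_four_chebyshevWeight
    (hB : ∀ x, B x = (T ℝ 1).eval x - (T ℝ 4).eval x) :
    ∫ x in Set.Icc (-1 : ℝ) 1, B x * (1 / (π * √(1 - x ^ 2))) = 0 := by
  simp_rw [setIntegral_Icc_mul_chebyshevWeight, hB]
  rw [integral_sub (integrable_measureT (by fun_prop)) (integrable_measureT (by fun_prop)),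
    integral_eval_T_real_measureT_of_ne_zero one_ne_zero,
    integral_eval_T_real_measureT_of_ne_zero (by norm_num)]
  simp

theorem integral_T_one_sub_T_four_mul_comp_T_chebyshevWeight
    (hB : ∀ x, B x = (T ℝ 1).eval x - (T ℝ 4).eval x) (M : ℕ) :
    ∫ x in Set.Icc (-1 : ℝ) 1, B x * B ((T ℝ M).eval x) * (1 / (π * √(1 - x ^ 2)))
      = (if M = 1 then 1 else 0) - (if M = 4 then 1 / 2 else 0) := by
  have hexpand := integral_eval_T_real_sub_mul_sub_measureT (a := 1) (b := 4) one_ne_zero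
    (by norm_num) M (4 * M)
  simp_rw [Nat.cast_one, Nat.cast_ofNat, ← eval_T_one_sub_T_four_comp_T hB, ← hB] at hexpand
  have h14 : 1 ≠ 4 * M := by omega
  have h44 : 4 = 4 * M ↔ M = 1 := by omega
  rw [setIntegral_Icc_mul_chebyshevWeight, hexpand, if_neg h14, if_congr h44 rfl rfl]
  by_cases h1 : M = 1 <;> by_cases h4 : M = 4 <;> simp [h1, h4, eq_comm]
  field_simp

end

theorem Finset.sum_mul_ite_pow_eq_pow {R : Type*} [NonUnitalNonAssocSemiring R] {q k : ℕ}
    (hq : 2 ≤ q) {s : Finset ℕ} (hk : k ∈ s) (f : ℕ → R) (c : R) : ∑ l ∈ s, f l * (if q ^ l = q ^ k then c else 0) = f k * c := by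
  simp_rw [(Nat.pow_right_injective hq).eq_iff, mul_ite, mul_zero, sum_ite_eq', if_pos hk]

/-- for `B = T_1 − T_4`, the dynamics `T_2` gives `σ(N) = 2/N²`
while the dynamics `T_4` gives `σ(N) = 1/N²`, for `N ≥ 2`. -/
theorem chebyshev_superefficient_example_T1_minus_T4
    (B : ℝ → ℝ) (hB : ∀ x, B x = (T ℝ 1).eval x - (T ℝ 4).eval x)
    (σ : ℕ → ℕ → ℝ)
    (hσ : ∀ q N : ℕ, σ q N =
      (1 / (N : ℝ)) *
        ((∫ x in Set.Icc (-1 : ℝ) 1, B x ^ 2 * (1 / (Real.pi * Real.sqrt (1 - x ^ 2))))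
          - (∫ x in Set.Icc (-1 : ℝ) 1, B x * (1 / (Real.pi * Real.sqrt (1 - x ^ 2)))) ^ 2)
      + (2 / (N : ℝ) ^ 2) * ∑ l ∈ Icc 1 N, ((N : ℝ) - (l : ℝ)) *
          ((∫ x in Set.Icc (-1 : ℝ) 1,
              B x * B ((T ℝ (q ^ l : ℕ)).eval x) * (1 / (Real.pi * Real.sqrt (1 - x ^ 2))))
            - (∫ x in Set.Icc (-1 : ℝ) 1, B x * (1 / (Real.pi * Real.sqrt (1 - x ^ 2)))) ^ 2))
    (N : ℕ) (hN : 2 ≤ N) :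
    σ 2 N = 2 / (N : ℝ) ^ 2 ∧ σ 4 N = 1 / (N : ℝ) ^ 2 := by
  have hmean := integral_T_one_sub_T_four_chebyshevWeight hB
  have hcorr := integral_T_one_sub_T_four_mul_comp_T_chebyshevWeight hB
  have hvar : ∫ x in Set.Icc (-1 : ℝ) 1, B x ^ 2 * (1 / (π * √(1 - x ^ 2))) = 1 := by
    simpa [sq] using hcorr 1
  have hsum (q k : ℕ) (hq : 2 ≤ q) (hk : k ∈ Icc 1 N) (hqk : q ^ k = 4) :
      ∑ l ∈ Icc 1 N, ((N : ℝ) - l) *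
        ((∫ x in Set.Icc (-1 : ℝ) 1, B x * B ((T ℝ (q ^ l : ℕ)).eval x) * (1 / (π * √(1 - x ^ 2))))
          - (∫ x in Set.Icc (-1 : ℝ) 1, B x * (1 / (π * √(1 - x ^ 2)))) ^ 2)
        = ((N : ℝ) - k) * -(1 / 2) := by
    refine (sum_congr rfl fun l hl ↦ ?_).trans
      (Finset.sum_mul_ite_pow_eq_pow hq hk (fun l : ℕ ↦ (N : ℝ) - l) _)
    have hl1 : q ^ l ≠ 1 := (Nat.one_lt_pow (by grind) hq).ne'
    rw [hmean, hcorr, if_neg hl1, hqk]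
    split_ifs <;> ring
  rw [hσ, hσ, hsum 2 2 le_rfl (mem_Icc.2 ⟨by norm_num, hN⟩) rfl,
    hsum 4 1 (by norm_num) (mem_Icc.2 ⟨le_rfl, by omega⟩) rfl, hvar, hmean]
  constructor <;> field_simp <;> ring
end

section
/- With the setup of the multi-dimensional Chebyshev integrand, for N ≥ L the expected squared error satisfies σ(N) = (1/(2^s N))(Σ_{m=0}^{L} a_m)² − (1/(2^{s−1} N²)) Σ_{l=1}^{L} Σ_{m=l}^{L} l·a_m·a_{m−l}; in particular if Σ_{m=0}^{L} a_m = 0 then σ(N) = O(1/N²). -/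
/-!
Under the product of normalized arcsine measures the tensor Chebyshev polynomials
`x ↦ ∏ i, T_{e i}(x i)` with all `e i ≠ 0` have mean zero and are orthogonal, each of squared
norm `2⁻ˢ`. Since `T_q ∘ T_p^[l] = T_{q p^l}`, composing `B` with the `l`-th iterate of the map
shifts the index of its Chebyshev expansion by `l`, and because `m ↦ p^m` is injective for
`p ≥ 2` the covariance `⟨B · B_l⟩ - ⟨B⟩²` is the autocorrelation `2⁻ˢ ∑_{m=l}^{L} a_m a_{m-l}`,
which vanishes for `l > L`. Summing against the weights `N - l` and using
`(∑ a_m)² = ∑ a_m² + 2 ∑_{l ≥ 1} ∑_m a_m a_{m-l}` gives the closed form.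
-/

open Polynomial Polynomial.Chebyshev MeasureTheory Finset Asymptotics

section OrthogonalExpansion

variable {α κ : Type*} [MeasurableSpace α] {μ : Measure α} {φ : κ → α → ℝ}

theorem integral_sum_mul_sum_of_orthogonal [DecidableEq κ] {c : ℝ}
    (hφφ : ∀ j k, Integrable (fun x => φ j x * φ k x) μ)
    (horth : ∀ j k, ∫ x, φ j x * φ k x ∂μ = if j = k then c else 0)
    (S S' : Finset κ) (a b : κ → ℝ) :
    ∫ x, (∑ j ∈ S, a j * φ j x) * (∑ k ∈ S', b k * φ k x) ∂μ =
      c * ∑ j ∈ S ∩ S', a j * b j := by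
  have hexpand : ∀ x, (∑ j ∈ S, a j * φ j x) * (∑ k ∈ S', b k * φ k x) =
      ∑ j ∈ S, ∑ k ∈ S', a j * b k * (φ j x * φ k x) := fun x => by
    rw [sum_mul_sum]; congr! 2 with j _ k _; ring
  simp_rw [hexpand]
  rw [integral_finsetSum _ fun j _ => integrable_finsetSum _ fun k _ => (hφφ j k).const_mul _]
  simp_rw [integral_finsetSum _ fun k _ => (hφφ _ k).const_mul _, integral_const_mul, horth,
    mul_ite, mul_zero, sum_ite_eq, ← sum_filter, filter_mem_eq_inter, mul_sum]
  congr! 1 with j _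
  ring

theorem integral_sum_eq_zero_of_mean_zero (hφ : ∀ k, Integrable (φ k) μ)
    (hmean : ∀ k, ∫ x, φ k x ∂μ = 0) (S : Finset κ) (a : κ → ℝ) :
    ∫ x, ∑ k ∈ S, a k * φ k x ∂μ = 0 := by
  rw [integral_finsetSum _ fun k _ => (hφ k).const_mul (a k)]
  simp [integral_const_mul, hmean]

variable [IsProbabilityMeasure μ]

theorem integral_const_add_sum_of_mean_zero (hφ : ∀ k, Integrable (φ k) μ)
    (hmean : ∀ k, ∫ x, φ k x ∂μ = 0) (c₀ : ℝ) (S : Finset κ) (a : κ → ℝ) :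
    ∫ x, (c₀ + ∑ k ∈ S, a k * φ k x) ∂μ = c₀ := by
  rw [integral_add (integrable_const c₀)
      (integrable_finsetSum _ fun k _ => (hφ k).const_mul (a k)),
    integral_sum_eq_zero_of_mean_zero hφ hmean, integral_const, probReal_univ, one_smul, add_zero]

theorem integral_const_add_sum_mul_const_add_sum [DecidableEq κ] {c : ℝ}
    (hφ : ∀ k, Integrable (φ k) μ) (hmean : ∀ k, ∫ x, φ k x ∂μ = 0)
    (hφφ : ∀ j k, Integrable (fun x => φ j x * φ k x) μ)
    (horth : ∀ j k, ∫ x, φ j x * φ k x ∂μ = if j = k then c else 0)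
    (c₀ d₀ : ℝ) (S S' : Finset κ) (a b : κ → ℝ) :
    ∫ x, (c₀ + ∑ j ∈ S, a j * φ j x) * (d₀ + ∑ k ∈ S', b k * φ k x) ∂μ =
      c₀ * d₀ + c * ∑ j ∈ S ∩ S', a j * b j := by
  set X := fun x => ∑ j ∈ S, a j * φ j x
  set Y := fun x => ∑ k ∈ S', b k * φ k x
  have hX : Integrable X μ := integrable_finsetSum _ fun k _ => (hφ k).const_mul (a k)
  have hY : Integrable (fun x => d₀ + Y x) μ :=
    (integrable_const d₀).add (integrable_finsetSum _ fun k _ => (hφ k).const_mul (b k))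
  have hXY : Integrable (fun x => X x * Y x) μ := by
    simp_rw [X, Y, sum_mul_sum]
    exact integrable_finsetSum _ fun j _ => integrable_finsetSum _ fun k _ =>
      ((hφφ j k).const_mul (a j * b k)).congr (.of_forall fun x => by ring)
  have hlin : Integrable (fun x => c₀ * (d₀ + Y x) + d₀ * X x) μ :=
    (hY.const_mul c₀).add (hX.const_mul d₀)
  calc ∫ x, (c₀ + X x) * (d₀ + Y x) ∂μ
      = ∫ x, (c₀ * (d₀ + Y x) + d₀ * X x + X x * Y x) ∂μ := by
        congr 1; ext x; ring
    _ = c₀ * d₀ + c * ∑ j ∈ S ∩ S', a j * b j := by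
        rw [integral_add hlin hXY, integral_add (hY.const_mul c₀) (hX.const_mul d₀),
          integral_const_mul, integral_const_mul, integral_const_add_sum_of_mean_zero hφ hmean,
          integral_sum_eq_zero_of_mean_zero hφ hmean, integral_sum_mul_sum_of_orthogonal hφφ horth,
          mul_zero, add_zero]

end OrthogonalExpansion

section Autocorrelation

variable {R : Type*} [CommSemiring R]

def autocorr (a : ℕ → R) (L l : ℕ) : R := ∑ m ∈ Icc l L, a m * a (m - l)

theorem autocorr_zero (a : ℕ → R) (L : ℕ) : autocorr a L 0 = ∑ m ∈ range (L + 1), a m ^ 2 := by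
  rw [autocorr, Nat.range_succ_eq_Icc_zero]
  simp [sq]

theorem autocorr_of_lt (a : ℕ → R) {L l : ℕ} (h : L < l) : autocorr a L l = 0 := by
  rw [autocorr, Icc_eq_empty (by omega), sum_empty]

theorem autocorr_succ (a : ℕ → R) {L l : ℕ} (h : l ≤ L + 1) :
    autocorr a (L + 1) l = autocorr a L l + a (L + 1) * a (L + 1 - l) := by
  rw [autocorr, autocorr, sum_Icc_succ_top h]

theorem sum_autocorr_succ (a : ℕ → R) (L : ℕ) :
    ∑ l ∈ Icc 1 (L + 1), autocorr a (L + 1) l =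
      ∑ l ∈ Icc 1 L, autocorr a L l + a (L + 1) * ∑ m ∈ range (L + 1), a m := by
  have hreflect : ∑ l ∈ Icc 1 (L + 1), a (L + 1 - l) = ∑ m ∈ range (L + 1), a m :=
    sum_nbij' (fun l => L + 1 - l) (fun m => L + 1 - m) (by simp; omega) (by simp; omega)
      (by simp; omega) (by simp; omega) (fun _ _ => rfl)
  rw [sum_congr rfl fun l hl => autocorr_succ a (mem_Icc.1 hl).2, sum_add_distrib, ← mul_sum,
    hreflect, sum_Icc_succ_top (by omega), autocorr_of_lt a (Nat.lt_succ_self L), add_zero]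

theorem sq_sum_eq_autocorr_zero_add_two_mul (a : ℕ → R) (L : ℕ) :
    (∑ m ∈ range (L + 1), a m) ^ 2 = autocorr a L 0 + 2 * ∑ l ∈ Icc 1 L, autocorr a L l := by
  induction L with
  | zero => simp [autocorr_zero]
  | succ L ih =>
    rw [sum_range_succ, add_sq, ih, sum_autocorr_succ, autocorr_zero, autocorr_zero,
      sum_range_succ (fun m => a m ^ 2) (L + 1)]
    ring

theorem sum_mul_autocorr (a : ℕ → R) (L : ℕ) :
    ∑ l ∈ Icc 1 L, (l : R) * autocorr a L l =
      ∑ l ∈ Icc 1 L, ∑ m ∈ Icc l L, (l : R) * a m * a (m - l) := by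
  simp only [autocorr, mul_sum, mul_assoc]

theorem autocorr_sigma_formula (c : ℝ) (a : ℕ → ℝ) {L N : ℕ} (hLN : L ≤ N) :
    1 / (N : ℝ) * (c * autocorr a L 0)
        + 2 / (N : ℝ) ^ 2 * ∑ l ∈ Icc 1 N, ((N : ℝ) - l) * (c * autocorr a L l) =
      c / N * (∑ m ∈ range (L + 1), a m) ^ 2
        - 2 * c / (N : ℝ) ^ 2 * ∑ l ∈ Icc 1 L, (l : ℝ) * autocorr a L l := by
  have htrunc : ∑ l ∈ Icc 1 N, ((N : ℝ) - l) * (c * autocorr a L l) =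
      ∑ l ∈ Icc 1 L, ((N : ℝ) - l) * (c * autocorr a L l) :=
    (sum_subset (Icc_subset_Icc_right hLN) fun l hl hlL => by
      rw [autocorr_of_lt a (by simp_all), mul_zero, mul_zero]).symm
  rw [htrunc, sq_sum_eq_autocorr_zero_add_two_mul]
  simp only [sub_mul, sum_sub_distrib, ← mul_sum, mul_left_comm _ c]
  rcases eq_or_ne (N : ℝ) 0 with hN | hN
  · simp [hN]
  · field_simp
    ring

end Autocorrelation

namespace Polynomial.Chebyshev

open Real

noncomputable def normalizedMeasureT : Measure ℝ := ENNReal.ofReal π⁻¹ • measureT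

theorem normalizedMeasureT_eq_withDensity : normalizedMeasureT =
    (volume.restrict (Set.Icc (-1 : ℝ) 1)).withDensity
      (fun x => ENNReal.ofReal (1 / (π * √(1 - x ^ 2)))) := by
  rw [normalizedMeasureT, measureT, restrict_withDensity measurableSet_Ioc,
    Measure.restrict_congr_set Ioc_ae_eq_Icc, ← withDensity_smul' _ _ ENNReal.ofReal_ne_top]
  congr 1
  ext x
  simp only [Pi.smul_apply, smul_eq_mul, one_div, mul_inv]
  rw [ENNReal.ofReal_mul (by positivity), ← Real.sqrt_inv,
    ENNReal.ofReal_eq_coe_nnreal (x := √(1 - x ^ 2)⁻¹) (by positivity)]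

instance : IsFiniteMeasure measureT :=
  (integrable_const_iff.1 (integrable_measureT (f := fun _ => (1 : ℝ)) continuousOn_const)
    ).resolve_left one_ne_zero

theorem measureT_real_univ : measureT.real Set.univ = π := by
  simpa using integral_eval_T_real_measureT_zero

instance : IsProbabilityMeasure normalizedMeasureT := by
  rw [isProbabilityMeasure_iff, normalizedMeasureT, Measure.smul_apply, ← ofReal_measureReal,
    measureT_real_univ, smul_eq_mul, ← ENNReal.ofReal_mul (by positivity),
    inv_mul_cancel₀ pi_ne_zero, ENNReal.ofReal_one]

theorem integral_normalizedMeasureT (f : ℝ → ℝ) :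
    ∫ x, f x ∂normalizedMeasureT = π⁻¹ * ∫ x, f x ∂measureT := by
  rw [normalizedMeasureT, integral_smul_measure, ENNReal.toReal_ofReal (by positivity),
    smul_eq_mul]

theorem integrable_normalizedMeasureT {f : ℝ → ℝ} (hf : ContinuousOn f (Set.Icc (-1) 1)) :
    Integrable f normalizedMeasureT :=
  (integrable_measureT hf).smul_measure ENNReal.ofReal_ne_top

theorem integral_eval_T_real_normalizedMeasureT_of_ne_zero {n : ℕ} (hn : n ≠ 0) :
    ∫ x, (T ℝ n).eval x ∂normalizedMeasureT = 0 := by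
  rw [integral_normalizedMeasureT, integral_eval_T_real_measureT_of_ne_zero (by exact_mod_cast hn),
    mul_zero]

theorem integral_eval_T_real_mul_eval_T_real_normalizedMeasureT {n : ℕ} (hn : n ≠ 0) (m : ℕ) :
    ∫ x, (T ℝ n).eval x * (T ℝ m).eval x ∂normalizedMeasureT = if n = m then 2⁻¹ else 0 := by
  rw [integral_normalizedMeasureT]
  split_ifs with h
  · subst h
    rw [integral_T_real_mul_self_measureT_of_ne_zero hn]
    field_simp [pi_ne_zero]
  · rw [integral_eval_T_real_mul_eval_T_real_measureT_of_ne h, mul_zero]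

theorem iterate_eval_T {R : Type*} [CommRing R] (q : ℤ) (l : ℕ) (x : R) :
    (fun y => (T R q).eval y)^[l] x = (T R (q ^ l)).eval x := by
  induction l generalizing x with
  | zero => simp
  | succ l ih => rw [Function.iterate_succ_apply, ih, pow_succ, T_mul, eval_comp]

variable {ι : Type*} [Fintype ι]

noncomputable def prodT (e : ι → ℕ) (x : ι → ℝ) : ℝ := ∏ i, (T ℝ (e i)).eval (x i)

local notation "ν" => Measure.pi fun _ : ι => normalizedMeasureT

theorem integrable_prod_eval_pi_normalizedMeasureT (q : ι → ℝ[X]) :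
    Integrable (fun x : ι → ℝ => ∏ i, (q i).eval (x i)) ν :=
  Integrable.fintype_prod fun i => integrable_normalizedMeasureT (q i).continuous.continuousOn

theorem integrable_prodT (e : ι → ℕ) : Integrable (prodT e) ν :=
  integrable_prod_eval_pi_normalizedMeasureT _

theorem prodT_mul_prodT (e f : ι → ℕ) (x : ι → ℝ) :
    prodT e x * prodT f x = ∏ i, (T ℝ (e i) * T ℝ (f i)).eval (x i) := by
  simp only [prodT, eval_mul, prod_mul_distrib]

theorem integrable_prodT_mul_prodT (e f : ι → ℕ) :
    Integrable (fun x => prodT e x * prodT f x) ν := by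
  simp_rw [prodT_mul_prodT]
  exact integrable_prod_eval_pi_normalizedMeasureT _

theorem integral_prodT {e : ι → ℕ} (he : e ≠ 0) : ∫ x, prodT e x ∂ν = 0 := by
  obtain ⟨i, hi⟩ := Function.ne_iff.1 he
  unfold prodT
  rw [integral_fintype_prod_eq_prod (f := fun i y => (T ℝ (e i)).eval y)]
  exact prod_eq_zero (mem_univ i) (integral_eval_T_real_normalizedMeasureT_of_ne_zero hi)

theorem integral_prodT_mul_prodT {e : ι → ℕ} (he : ∀ i, e i ≠ 0) (f : ι → ℕ) :
    ∫ x, prodT e x * prodT f x ∂ν = if e = f then (2 ^ Fintype.card ι)⁻¹ else 0 := by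
  simp_rw [prodT_mul_prodT, eval_mul]
  rw [integral_fintype_prod_eq_prod (f := fun i y => (T ℝ (e i)).eval y * (T ℝ (f i)).eval y)]
  simp_rw [integral_eval_T_real_mul_eval_T_real_normalizedMeasureT (he _)]
  split_ifs with h
  · simp [h]
  · obtain ⟨i, hi⟩ := Function.ne_iff.1 h
    exact prod_eq_zero (mem_univ i) (if_neg hi)

theorem prodT_comp_iterate (e q : ι → ℕ) (l : ℕ) (x : ι → ℝ) :
    prodT e (fun i => (fun y => (T ℝ (q i)).eval y)^[l] (x i)) = prodT (e * q ^ l) x := by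
  simp only [prodT, iterate_eval_T, ← eval_comp, ← T_mul, Pi.mul_apply, Pi.pow_apply]
  push_cast
  rfl

noncomputable def chebyshevIntegrand (p : ι → ℕ) (ac : ℝ) (a : ℕ → ℝ) (L : ℕ) (x : ι → ℝ) : ℝ :=
  ac + ∑ m ∈ range (L + 1), a m * prodT (p ^ m) x

theorem chebyshevIntegrand_comp_iterate (p : ι → ℕ) (ac : ℝ) (a : ℕ → ℝ) (L l : ℕ)
    (x : ι → ℝ) :
    chebyshevIntegrand p ac a L (fun i => (fun y => (T ℝ (p i)).eval y)^[l] (x i)) =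
      ac + ∑ k ∈ Ico l (L + 1 + l), a (k - l) * prodT (p ^ k) x := by
  simp only [chebyshevIntegrand, prodT_comp_iterate, ← pow_add, sum_Ico_eq_sum_range,
    Nat.add_sub_cancel, add_comm l]

variable [Nonempty ι] {p : ι → ℕ}

theorem integral_prodT_pow (hp : ∀ i, p i ≠ 0) (m : ℕ) : ∫ x, prodT (p ^ m) x ∂ν = 0 :=
  integral_prodT (Function.ne_iff.2 ⟨Classical.arbitrary ι, pow_ne_zero m (hp _)⟩)

theorem integral_prodT_pow_mul_prodT_pow (hp : ∀ i, 2 ≤ p i) (j k : ℕ) :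
    ∫ x, prodT (p ^ j) x * prodT (p ^ k) x ∂ν =
      if j = k then (2 ^ Fintype.card ι)⁻¹ else 0 := by
  have hinj : p ^ j = p ^ k ↔ j = k := by
    refine ⟨fun h => ?_, fun h => h ▸ rfl⟩
    obtain i := Classical.arbitrary ι
    exact Nat.pow_right_injective (hp i) (congrFun h i)
  rw [integral_prodT_mul_prodT (e := p ^ j) fun i =>
    pow_ne_zero j (zero_lt_two.trans_le (hp i)).ne']
  simp only [hinj]

theorem integral_chebyshevIntegrand (hp : ∀ i, p i ≠ 0) (ac : ℝ) (a : ℕ → ℝ) (L : ℕ) :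
    ∫ x, chebyshevIntegrand p ac a L x ∂ν = ac :=
  integral_const_add_sum_of_mean_zero (fun _ => integrable_prodT _) (integral_prodT_pow hp) ac _ a

theorem integral_chebyshevIntegrand_mul_comp_iterate (hp : ∀ i, 2 ≤ p i) (ac : ℝ) (a : ℕ → ℝ)
    (L l : ℕ) :
    ∫ x, chebyshevIntegrand p ac a L x *
        chebyshevIntegrand p ac a L (fun i => (fun y => (T ℝ (p i)).eval y)^[l] (x i)) ∂ν =
      ac ^ 2 + (2 ^ Fintype.card ι)⁻¹ * autocorr a L l := by
  have hinter : range (L + 1) ∩ Ico l (L + 1 + l) = Icc l L := by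
    ext m; simp only [mem_inter, mem_range, mem_Ico, mem_Icc]; omega
  simp_rw [chebyshevIntegrand_comp_iterate]
  unfold chebyshevIntegrand
  rw [integral_const_add_sum_mul_const_add_sum (fun _ => integrable_prodT _)
    (integral_prodT_pow fun i => (zero_lt_two.trans_le (hp i)).ne')
    (fun _ _ => integrable_prodT_mul_prodT _ _) (integral_prodT_pow_mul_prodT_pow hp), hinter, sq,
    autocorr]

theorem integral_chebyshevIntegrand_sq (hp : ∀ i, 2 ≤ p i) (ac : ℝ) (a : ℕ → ℝ) (L : ℕ) :
    ∫ x, chebyshevIntegrand p ac a L x ^ 2 ∂ν =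
      ac ^ 2 + (2 ^ Fintype.card ι)⁻¹ * autocorr a L 0 := by
  simpa [sq] using integral_chebyshevIntegrand_mul_comp_iterate hp ac a L 0

end Polynomial.Chebyshev

/-- exact expected squared error for the multi-dimensional
Chebyshev integrand, and superefficiency when `Σ a_m = 0`. -/
theorem multidim_chebyshev_superefficiency
    (s : ℕ) (hs : 1 ≤ s) (L : ℕ) (ac : ℝ) (a : ℕ → ℝ)
    (p : Fin s → ℕ) (hp : ∀ i, 2 ≤ p i)
    (μs : Measure (Fin s → ℝ))
    (hμs : μs = Measure.pi (fun _ : Fin s =>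
      (volume.restrict (Set.Icc (-1 : ℝ) 1)).withDensity
        (fun x => ENNReal.ofReal (1 / (Real.pi * Real.sqrt (1 - x ^ 2))))))
    (B : (Fin s → ℝ) → ℝ)
    (hB : ∀ x, B x = ac + ∑ m ∈ range (L + 1),
        a m * ∏ i : Fin s, (T ℝ ((p i) ^ m : ℕ)).eval (x i))
    (σ : ℕ → ℝ)
    (hσ : ∀ N : ℕ, σ N =
      (1 / (N : ℝ)) * ((∫ x, B x ^ 2 ∂μs) - (∫ x, B x ∂μs) ^ 2)
      + (2 / (N : ℝ) ^ 2) * ∑ l ∈ Icc 1 N, ((N : ℝ) - (l : ℝ)) *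
          ((∫ x, B x * B (fun i => (fun y => (T ℝ (p i)).eval y)^[l] (x i)) ∂μs)
            - (∫ x, B x ∂μs) ^ 2)) :
    (∀ N : ℕ, L ≤ N → 1 ≤ N →
      σ N = (1 / ((2 : ℝ) ^ s * N)) * (∑ m ∈ range (L + 1), a m) ^ 2
        - (1 / ((2 : ℝ) ^ (s - 1) * (N : ℝ) ^ 2)) *
            ∑ l ∈ Icc 1 L, ∑ m ∈ Icc l L, (l : ℝ) * a m * a (m - l))
    ∧ (∑ m ∈ range (L + 1), a m = 0 →
        (fun N : ℕ => σ N) =O[Filter.atTop] (fun N : ℕ => 1 / (N : ℝ) ^ 2)) := by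
  have : Nonempty (Fin s) := ⟨⟨0, hs⟩⟩
  have hp₀ : ∀ i, p i ≠ 0 := fun i => (zero_lt_two.trans_le (hp i)).ne'
  obtain rfl : μs = Measure.pi fun _ => normalizedMeasureT := by
    rw [hμs, normalizedMeasureT_eq_withDensity]
  obtain rfl : B = chebyshevIntegrand p ac a L := funext hB
  have hσL : ∀ N, L ≤ N → σ N = (1 / ((2 : ℝ) ^ s * N)) * (∑ m ∈ range (L + 1), a m) ^ 2
      - (1 / ((2 : ℝ) ^ (s - 1) * (N : ℝ) ^ 2)) *
          ∑ l ∈ Icc 1 L, ∑ m ∈ Icc l L, (l : ℝ) * a m * a (m - l) := by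
    intro N hLN
    have h2 : (2 : ℝ) ^ s = 2 * 2 ^ (s - 1) := by rw [← pow_succ', Nat.sub_add_cancel hs]
    rw [hσ, integral_chebyshevIntegrand_sq hp, integral_chebyshevIntegrand hp₀]
    simp_rw [integral_chebyshevIntegrand_mul_comp_iterate hp, add_sub_cancel_left,
      Fintype.card_fin]
    rw [autocorr_sigma_formula _ a hLN, sum_mul_autocorr, h2]
    field_simp
  refine ⟨fun N hLN _ => hσL N hLN, fun hsum => ?_⟩
  refine (isBigO_const_mul_self (-(1 / (2 : ℝ) ^ (s - 1)) *
    ∑ l ∈ Icc 1 L, ∑ m ∈ Icc l L, (l : ℝ) * a m * a (m - l)) _ _).congr' ?_ .rfl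
  filter_upwards [Filter.eventually_ge_atTop L] with N hLN
  rw [hσL N hLN, hsum]
  ring
end
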